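/- arXiv:1212.2943 — 2 statements merged into one kernel-verified Lean document; each statement's English description precedes it below -/
import Mathlib

section
/- Fix m > 0 and let k be the largest integer such that k < 2/α. Then there exist constants C > 0 and t₀ > 0 such that for all 0 < t < t₀, | p^m(t,0) - p^0(t,0) - t^{-d/α} (ω_d Γ(d/α)/((2π)^d α)) Σ_{n=1}^{k} (m^n/n!) t^n | ≤ C t^{(2-d)/α}, where ω_d = 2π^{d/2}/Γ(d/2). In other words, p^m(t,x,x) - p^0(t,x,x) = t^{-d/α} (ω_d Γ(d/α)/((2π)^d α)) Σ_{n=1}^{k} (m^n/n!) t^n + O(t^{2/α} t^{-d/α}). -/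
/-!
At `x = 0` the Fourier integral is radial:
`p^m(t,0) = (2π)^{-d} ω_d e^{tm} ∫_0^∞ r^{d-1} exp(-t (r² + m^{2/α})^{α/2}) dr`,
and for `m = 0` the radial integral is the Gamma integral `t^{-d/α} Γ(d/α)/α`.
Concavity of `s ↦ s^{α/2}` gives `0 ≤ (r² + c)^{α/2} - r^α ≤ (α/2) c r^{α-2}`, so the massive
radial integral differs from the massless one by `O(t · t^{-(d+α-2)/α}) = O(t^{(2-d)/α})`.
What remains is the Taylor expansion of `e^{tm}` to order `k`, whose remainder
`O(t^{k+1})` is `O(t^{2/α})`.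
-/

open MeasureTheory Real Set Finset Module

/-- The transition density `p^m(t,x)` of the relativistic `α`-stable process with mass `m`. -/
noncomputable def relDensity (d : ℕ) (α m t : ℝ) (x : EuclideanSpace ℝ (Fin d)) : ℝ :=
  (2 * Real.pi) ^ (-(d : ℝ)) *
    (∫ ξ : EuclideanSpace ℝ (Fin d),
      Complex.exp (-(Complex.I * ((inner ℝ ξ x : ℝ) : ℂ)) -
        ((t * ((‖ξ‖ ^ (2 : ℝ) + m ^ ((2 : ℝ) / α)) ^ (α / 2) - m) : ℝ) : ℂ))).re

noncomputable def unitSphereArea (d : ℕ) : ℝ := 2 * π ^ ((d : ℝ) / 2) / Gamma ((d : ℝ) / 2)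

section RadialIntegration

variable {E : Type*} [NormedAddCommGroup E] [InnerProductSpace ℝ E] [FiniteDimensional ℝ E]
  [MeasurableSpace E] [BorelSpace E] [Nontrivial E]

theorem finrank_mul_measureReal_ball_zero_one :
    finrank ℝ E * volume.real (Metric.ball (0 : E) 1) = unitSphereArea (finrank ℝ E) := by
  have hd : (finrank ℝ E : ℝ) ≠ 0 := by simp [finrank_pos.ne']
  have hΓ : 0 < Gamma ((finrank ℝ E : ℝ) / 2) := Gamma_pos_of_pos (by positivity)
  rw [measureReal_def, InnerProductSpace.volume_ball, ENNReal.ofReal_one, one_pow, one_mul,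
    ENNReal.toReal_ofReal (by positivity), Gamma_add_one (by positivity), sqrt_eq_rpow,
    ← rpow_natCast, ← rpow_mul pi_nonneg, unitSphereArea]
  field_simp

theorem integral_fun_norm_eq_unitSphereArea_mul (f : ℝ → ℝ) :
    ∫ x : E, f ‖x‖ =
      unitSphereArea (finrank ℝ E) * ∫ y in Ioi 0, y ^ ((finrank ℝ E : ℝ) - 1) * f y := by
  rw [integral_fun_norm_addHaar, nsmul_eq_mul, smul_eq_mul, ← mul_assoc,
    finrank_mul_measureReal_ball_zero_one]
  congr 1
  refine setIntegral_congr_fun measurableSet_Ioi fun y _ => ?_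
  rw [smul_eq_mul, ← rpow_natCast, Nat.cast_sub finrank_pos, Nat.cast_one]

end RadialIntegration

theorem relDensity_apply_zero {d : ℕ} (hd : 0 < d) (α m t : ℝ) :
    relDensity d α m t 0 = (2 * π) ^ (-(d : ℝ)) * unitSphereArea d * exp (t * m) *
      ∫ y in Ioi 0,
        y ^ ((d : ℝ) - 1) * exp (-(t * (y ^ (2 : ℝ) + m ^ ((2 : ℝ) / α)) ^ (α / 2))) := by
  have : Nonempty (Fin d) := ⟨⟨0, hd⟩⟩
  have hreal : ∀ ξ : EuclideanSpace ℝ (Fin d),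
      Complex.exp (-(Complex.I * ((inner ℝ ξ 0 : ℝ) : ℂ)) -
        ((t * ((‖ξ‖ ^ (2 : ℝ) + m ^ ((2 : ℝ) / α)) ^ (α / 2) - m) : ℝ) : ℂ)) =
      ((exp (t * m) * exp (-(t * (‖ξ‖ ^ (2 : ℝ) + m ^ ((2 : ℝ) / α)) ^ (α / 2))) : ℝ) : ℂ) := by
    intro ξ
    rw [inner_zero_right, ← exp_add, Complex.ofReal_exp]
    push_cast
    ring_nf
  rw [relDensity, funext hreal, integral_complex_ofReal, Complex.ofReal_re, integral_const_mul,
    integral_fun_norm_eq_unitSphereArea_mul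
      (fun r => exp (-(t * (r ^ (2 : ℝ) + m ^ ((2 : ℝ) / α)) ^ (α / 2)))),
    finrank_euclideanSpace_fin]
  ring

theorem setIntegral_rpow_sub_one_mul_exp_neg_mul_rpow {d α t : ℝ} (hd : 0 < d) (hα : 0 < α)
    (ht : 0 < t) :
    ∫ y in Ioi 0, y ^ (d - 1) * exp (-(t * y ^ α)) = t ^ (-(d / α)) * (Gamma (d / α) / α) := by
  simp_rw [← neg_mul]
  rw [integral_rpow_mul_exp_neg_mul_rpow hα (by linarith) ht, sub_add_cancel, neg_div]
  ring

theorem relDensity_zero_apply_zero {d : ℕ} (hd : 0 < d) {α t : ℝ} (hα : 0 < α) (ht : 0 < t) :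
    relDensity d α 0 t 0 =
      (2 * π) ^ (-(d : ℝ)) * unitSphereArea d * (t ^ (-(d / α)) * (Gamma (d / α) / α)) := by
  rw [relDensity_apply_zero hd, mul_zero, exp_zero, mul_one,
    ← setIntegral_rpow_sub_one_mul_exp_neg_mul_rpow (by positivity) hα ht]
  congr 1
  refine setIntegral_congr_fun measurableSet_Ioi fun y (hy : 0 < y) => ?_
  rw [zero_rpow (by positivity), add_zero, ← rpow_mul hy.le]
  ring_nf

theorem rpow_add_sub_rpow_le {x c p : ℝ} (hx : 0 < x) (hc : 0 ≤ c) (hp₀ : 0 ≤ p) (hp₁ : p ≤ 1) :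
    (x + c) ^ p - x ^ p ≤ p * c * x ^ (p - 1) := by
  have hcx : 0 ≤ c / x := by positivity
  calc (x + c) ^ p - x ^ p = x ^ p * (1 + c / x) ^ p - x ^ p := by
        rw [← mul_rpow hx.le (by positivity), mul_add, mul_one, mul_div_cancel₀ _ hx.ne']
    _ ≤ x ^ p * (1 + p * (c / x)) - x ^ p := by
        gcongr
        exact rpow_one_add_le_one_add_mul_self (by linarith) hp₀ hp₁
    _ = p * c * x ^ (p - 1) := by
        rw [rpow_sub_one hx.ne']
        field_simp
        ring

theorem exp_neg_sub_exp_neg_le (a b : ℝ) : exp (-a) - exp (-b) ≤ (b - a) * exp (-a) := by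
  have h : exp (-b) = exp (-a) * exp (a - b) := by rw [← exp_add]; ring_nf
  nlinarith [add_one_le_exp (a - b), exp_pos (-a)]

theorem rpow_le_sq_add_rpow_half {y c α : ℝ} (hy : 0 ≤ y) (hc : 0 ≤ c) (hα : 0 ≤ α) :
    y ^ α ≤ (y ^ (2 : ℝ) + c) ^ (α / 2) := by
  calc y ^ α = (y ^ (2 : ℝ)) ^ (α / 2) := by rw [← rpow_mul hy]; ring_nf
    _ ≤ (y ^ (2 : ℝ) + c) ^ (α / 2) := by gcongr; linarith

theorem exp_neg_mul_rpow_sub_le {α t c y : ℝ} (hα₀ : 0 < α) (hα₂ : α ≤ 2) (ht : 0 ≤ t)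
    (hc : 0 ≤ c) (hy : 0 < y) :
    exp (-(t * y ^ α)) - exp (-(t * (y ^ (2 : ℝ) + c) ^ (α / 2))) ≤
      t * (α / 2) * c * y ^ (α - 2) * exp (-(t * y ^ α)) := by
  have hsq : ∀ s : ℝ, (y ^ (2 : ℝ)) ^ (s / 2) = y ^ s := fun s => by rw [← rpow_mul hy.le]; ring_nf
  have hincr : (y ^ (2 : ℝ) + c) ^ (α / 2) - y ^ α ≤ α / 2 * c * y ^ (α - 2) := by
    have := rpow_add_sub_rpow_le (rpow_pos_of_pos hy 2) hc (by linarith) (by linarith : α / 2 ≤ 1)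
    rwa [hsq, show α / 2 - 1 = (α - 2) / 2 by ring, hsq] at this
  calc _ ≤ (t * (y ^ (2 : ℝ) + c) ^ (α / 2) - t * y ^ α) * exp (-(t * y ^ α)) :=
        exp_neg_sub_exp_neg_le _ _
    _ = t * ((y ^ (2 : ℝ) + c) ^ (α / 2) - y ^ α) * exp (-(t * y ^ α)) := by ring
    _ ≤ t * (α / 2 * c * y ^ (α - 2)) * exp (-(t * y ^ α)) := by gcongr
    _ = _ := by ring

theorem abs_radialIntegral_sub_massless_le {d α t c : ℝ} (hd : 2 - α < d) (hα₀ : 0 < α)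
    (hα₂ : α ≤ 2) (ht : 0 < t) (hc : 0 ≤ c) :
    |(∫ y in Ioi 0, y ^ (d - 1) * exp (-(t * (y ^ (2 : ℝ) + c) ^ (α / 2)))) -
        t ^ (-(d / α)) * (Gamma (d / α) / α)| ≤
      c / 2 * Gamma ((d + α - 2) / α) * t ^ ((2 - d) / α) := by
  set g₀ : ℝ → ℝ := fun y => y ^ (d - 1) * exp (-(t * y ^ α))
  set g : ℝ → ℝ := fun y => y ^ (d - 1) * exp (-(t * (y ^ (2 : ℝ) + c) ^ (α / 2)))
  have hg₀ : IntegrableOn g₀ (Ioi 0) := by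
    simpa only [g₀, neg_mul] using
      integrableOn_rpow_mul_exp_neg_mul_rpow (by linarith : -1 < d - 1) hα₀ ht
  have hh : IntegrableOn (fun y => y ^ (d + α - 3) * exp (-(t * y ^ α))) (Ioi 0) := by
    simpa only [neg_mul] using
      integrableOn_rpow_mul_exp_neg_mul_rpow (by linarith : -1 < d + α - 3) hα₀ ht
  have hg_le : ∀ y ∈ Ioi (0 : ℝ), g y ≤ g₀ y := fun y (hy : 0 < y) => by
    have := rpow_le_sq_add_rpow_half hy.le hc hα₀.le
    simp only [g, g₀]
    gcongr
  have hg : IntegrableOn g (Ioi 0) := by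
    refine hg₀.mono' (by fun_prop) ((ae_restrict_iff' measurableSet_Ioi).mpr
      (.of_forall fun y (hy : 0 < y) => ?_))
    rw [Real.norm_of_nonneg (by positivity)]
    exact hg_le y hy
  have hdiff : ∀ y ∈ Ioi (0 : ℝ), g₀ y - g y ≤
      t * (α / 2) * c * (y ^ (d + α - 3) * exp (-(t * y ^ α))) := fun y (hy : 0 < y) => by
    have := exp_neg_mul_rpow_sub_le hα₀ hα₂ ht.le hc hy
    calc g₀ y - g y = y ^ (d - 1) *
          (exp (-(t * y ^ α)) - exp (-(t * (y ^ (2 : ℝ) + c) ^ (α / 2)))) := by ring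
      _ ≤ y ^ (d - 1) * (t * (α / 2) * c * y ^ (α - 2) * exp (-(t * y ^ α))) := by gcongr
      _ = _ := by rw [show d + α - 3 = (d - 1) + (α - 2) by ring, rpow_add hy]; ring
  rw [← setIntegral_rpow_sub_one_mul_exp_neg_mul_rpow (by linarith) hα₀ ht]
  change |(∫ y in Ioi 0, g y) - ∫ y in Ioi 0, g₀ y| ≤ _
  rw [abs_sub_comm, ← integral_sub hg₀ hg, abs_of_nonneg
    (setIntegral_nonneg measurableSet_Ioi fun y hy => sub_nonneg.mpr (hg_le y hy))]
  calc _ ≤ ∫ y in Ioi 0, t * (α / 2) * c * (y ^ (d + α - 3) * exp (-(t * y ^ α))) :=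
        setIntegral_mono_on (hg₀.sub hg) (hh.const_mul _) measurableSet_Ioi hdiff
    _ = _ := by
      rw [integral_const_mul, show d + α - 3 = (d + α - 2) - 1 by ring,
        setIntegral_rpow_sub_one_mul_exp_neg_mul_rpow (by linarith) hα₀ ht]
      have htpow : t * t ^ (-((d + α - 2) / α)) = t ^ ((2 - d) / α) := by
        rw [mul_comm, ← rpow_add_one ht.ne']
        congr 1; field_simp; ring
      rw [← htpow]; field_simp

theorem sum_range_succ_pow_div_factorial (x : ℝ) (k : ℕ) :
    ∑ n ∈ range (k + 1), x ^ n / n.factorial = 1 + ∑ n ∈ Icc 1 k, x ^ n / n.factorial := by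
  rw [range_eq_Ico, sum_eq_sum_Ico_succ_bot k.succ_pos, Nat.succ_eq_add_one, zero_add,
    Finset.Ico_add_one_right_eq_Icc]
  simp

theorem abs_exp_mul_sub_taylor_le {m t r : ℝ} {k : ℕ} (hm : 0 ≤ m) (ht₀ : 0 < t) (ht₁ : t ≤ 1)
    (htm : t * m ≤ 1) (hr : r ≤ k + 1) :
    |exp (t * m) - (1 + ∑ n ∈ Icc 1 k, m ^ n / n.factorial * t ^ n)| ≤
      m ^ (k + 1) * ((k + 2) / ((k + 1).factorial * (k + 1))) * t ^ r := by
  have h := exp_bound (x := t * m) (by rwa [abs_of_nonneg (by positivity)]) k.succ_pos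
  simp_rw [Nat.succ_eq_add_one, sum_range_succ_pow_div_factorial, mul_pow,
    abs_of_nonneg (by positivity : 0 ≤ t * m)] at h
  calc _ = |exp (t * m) - (1 + ∑ n ∈ Icc 1 k, (t ^ n * m ^ n) / n.factorial)| := by
        congr 3; refine sum_congr rfl fun n _ => by ring
    _ ≤ _ := h
    _ = m ^ (k + 1) * ((k + 2) / ((k + 1).factorial * (k + 1))) * t ^ (k + 1 : ℝ) := by
        rw [← Nat.cast_add_one, rpow_natCast]
        push_cast
        ring
    _ ≤ _ := mul_le_mul_of_nonneg_left (rpow_le_rpow_of_exponent_ge ht₀ ht₁ hr) (by positivity)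

theorem relDensity_diff_expansion_general (d : ℕ) (hd : 2 ≤ d) (α : ℝ) (hα₀ : 0 < α) (hα₂ : α < 2)
    (m : ℝ) (hm : 0 < m) (k : ℕ) (hk₂ : 2 / α ≤ (k : ℝ) + 1) :
    ∃ C > 0, ∃ t₀ > 0, ∀ t : ℝ, 0 < t → t < t₀ →
      |relDensity d α m t 0 - relDensity d α 0 t 0
          - t ^ (-((d : ℝ) / α)) *
              ((2 * Real.pi ^ ((d : ℝ) / 2) / Real.Gamma ((d : ℝ) / 2)) *
                Real.Gamma ((d : ℝ) / α) / ((2 * Real.pi) ^ d * α)) *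
              ∑ n ∈ Finset.Icc 1 k, m ^ n / (n.factorial : ℝ) * t ^ n|
        ≤ C * t ^ ((2 - (d : ℝ)) / α) := by
  have hd₀ : 0 < d := by omega
  have hdα : 2 - α < (d : ℝ) := by have : (2 : ℝ) ≤ d := mod_cast hd; linarith
  set P := (2 * π) ^ (-(d : ℝ)) * unitSphereArea d with hP
  have hP₀ : 0 < P := by rw [hP, unitSphereArea]; positivity
  have hΓ₀ : 0 < Gamma (d / α) := Gamma_pos_of_pos (by positivity)
  have hΓ₁ : 0 < Gamma ((d + α - 2) / α) := Gamma_pos_of_pos (div_pos (by linarith) hα₀)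
  set K := m ^ ((2 : ℝ) / α) / 2 * Gamma ((d + α - 2) / α)
  set B := m ^ (k + 1) * ((k + 2) / ((k + 1).factorial * (k + 1)))
  refine ⟨P * (exp 1 * K + B * (Gamma (d / α) / α)), by positivity, min 1 m⁻¹, by positivity,
    fun t ht ht₀ => ?_⟩
  have ht₁ : t ≤ 1 := (ht₀.trans_le (min_le_left _ _)).le
  have htm : t * m ≤ 1 := by
    calc t * m ≤ m⁻¹ * m := by gcongr; exact (ht₀.trans_le (min_le_right _ _)).le
      _ = 1 := inv_mul_cancel₀ hm.ne'
  have hJ := abs_radialIntegral_sub_massless_le hdα hα₀ hα₂.le ht (rpow_nonneg hm.le (2 / α))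
  have hE := abs_exp_mul_sub_taylor_le hm.le ht ht₁ htm hk₂
  have hconst : 2 * π ^ ((d : ℝ) / 2) / Gamma ((d : ℝ) / 2) * Gamma (d / α) / ((2 * π) ^ d * α) =
      P * (Gamma (d / α) / α) := by
    rw [hP, unitSphereArea, rpow_neg (by positivity), rpow_natCast]
    field_simp
  rw [relDensity_apply_zero hd₀, relDensity_zero_apply_zero hd₀ hα₀ ht, hconst, ← hP]
  set J := ∫ y in Ioi 0,
    y ^ ((d : ℝ) - 1) * exp (-(t * (y ^ (2 : ℝ) + m ^ ((2 : ℝ) / α)) ^ (α / 2)))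
  set J₀ := t ^ (-((d : ℝ) / α)) * (Gamma (d / α) / α)
  set S := ∑ n ∈ Icc 1 k, m ^ n / (n.factorial : ℝ) * t ^ n
  calc _ = |P * (exp (t * m) * (J - J₀) + (exp (t * m) - (1 + S)) * J₀)| := by
        simp only [J₀]; ring_nf
    _ = P * |exp (t * m) * (J - J₀) + (exp (t * m) - (1 + S)) * J₀| := by
        rw [abs_mul, abs_of_pos hP₀]
    _ ≤ P * (exp 1 * (K * t ^ ((2 - d) / α)) + B * t ^ (2 / α) * J₀) := by
        gcongr
        refine (abs_add_le _ _).trans (add_le_add ?_ ?_)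
        · rw [abs_mul, abs_of_pos (exp_pos _)]
          gcongr
        · rw [abs_mul, abs_of_pos (by positivity : 0 < J₀)]
          gcongr
    _ = P * (exp 1 * K + B * (Gamma (d / α) / α)) * t ^ ((2 - d) / α) := by
        rw [show (2 - (d : ℝ)) / α = 2 / α + -(d / α) by ring, rpow_add ht]
        ring

/-- For `k` the largest integer with `k < 2/α`,
`p^m(t,0) - p^0(t,0) = t^{-d/α} (ω_d Γ(d/α)/((2π)^d α)) Σ_{n=1}^k (m^n/n!) t^n
  + O(t^{2/α} t^{-d/α})` as `t → 0⁺`. -/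
theorem relDensity_diff_expansion (d : ℕ) (hd : 2 ≤ d) (α : ℝ) (hα₀ : 0 < α) (hα₂ : α < 2)
    (m : ℝ) (hm : 0 < m) (k : ℕ) (hk₁ : (k : ℝ) < 2 / α) (hk₂ : 2 / α ≤ (k : ℝ) + 1) :
    ∃ C > 0, ∃ t₀ > 0, ∀ t : ℝ, 0 < t → t < t₀ →
      |relDensity d α m t 0 - relDensity d α 0 t 0
          - t ^ (-((d : ℝ) / α)) *
              ((2 * Real.pi ^ ((d : ℝ) / 2) / Real.Gamma ((d : ℝ) / 2)) *
                Real.Gamma ((d : ℝ) / α) / ((2 * Real.pi) ^ d * α)) *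
              ∑ n ∈ Finset.Icc 1 k, m ^ n / (n.factorial : ℝ) * t ^ n|
        ≤ C * t ^ ((2 - (d : ℝ)) / α) :=
  relDensity_diff_expansion_general d hd α hα₀ hα₂ m hm k hk₂
end

section
/- Fix 0 < L < M < ∞. Then for all m > 0, t ∈ [L,M] and x ∈ ℝ^d, | p^0(t,x) - p^m(t,x) | ≤ (2π)^{-d} L^{-d/α} [ e^{mM} (α/2) (mM)^{2/α} ∫_{ℝ^d} e^{-|ξ|^α} |ξ|^{α-2} dξ + (e^{mM} - 1) ∫_{ℝ^d} e^{-|ξ|^α} dξ ], and in particular the right-hand side tends to 0 as m → 0⁺. -/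
open MeasureTheory Real Set Filter

theorem norm_rpow_inv_smul_rpow {E : Type*} [NormedAddCommGroup E] [NormedSpace ℝ E] {p t : ℝ}
    (ht : 0 ≤ t) (hp : p ≠ 0) (x : E) : ‖t ^ p⁻¹ • x‖ ^ p = t * ‖x‖ ^ p := by
  rw [norm_smul, norm_of_nonneg (by positivity), mul_rpow (by positivity) (norm_nonneg _),
    ← rpow_mul ht, inv_mul_cancel₀ hp, rpow_one]

section NormRpow

variable {E : Type*} [NormedAddCommGroup E] [NormedSpace ℝ E] [FiniteDimensional ℝ E]
  [MeasurableSpace E] [BorelSpace E] (μ : Measure E) [μ.IsAddHaarMeasure] {p t : ℝ}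

theorem integrable_exp_neg_norm_rpow (hp : 0 < p) :
    Integrable (fun x : E => exp (-‖x‖ ^ p)) μ := by
  rcases subsingleton_or_nontrivial E with hE | hE
  · exact Integrable.of_finite
  · rw [integrable_fun_norm_addHaar μ (f := fun y => exp (-y ^ p))]
    refine (integrableOn_rpow_mul_exp_neg_rpow (s := (Module.finrank ℝ E - 1 : ℕ))
      (by linarith [Nat.cast_nonneg (α := ℝ) (Module.finrank ℝ E - 1)]) hp).congr_fun
      (fun y _ => ?_) measurableSet_Ioi
    simp only [rpow_natCast, smul_eq_mul]

theorem integrable_exp_neg_mul_norm_rpow (hp : 0 < p) (ht : 0 < t) :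
    Integrable (fun x : E => exp (-(t * ‖x‖ ^ p))) μ := by
  simpa only [norm_rpow_inv_smul_rpow ht.le hp.ne'] using
    (integrable_exp_neg_norm_rpow μ hp).comp_smul (rpow_pos_of_pos ht p⁻¹).ne'

theorem integral_exp_neg_mul_norm_rpow (hp : 0 < p) (ht : 0 < t) :
    ∫ x, exp (-(t * ‖x‖ ^ p)) ∂μ =
      t ^ (-(Module.finrank ℝ E / p)) * ∫ x, exp (-‖x‖ ^ p) ∂μ := by
  simp_rw [← norm_rpow_inv_smul_rpow ht.le hp.ne']
  rw [Measure.integral_comp_smul_of_nonneg μ (fun x => exp (-‖x‖ ^ p)) _ (hR := by positivity),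
    smul_eq_mul, ← rpow_natCast, ← rpow_mul ht.le, ← rpow_neg ht.le]
  congr 2
  ring

end NormRpow

noncomputable def relExponent (α m r : ℝ) : ℝ :=
  (r ^ (2 : ℝ) + m ^ ((2 : ℝ) / α)) ^ (α / 2) - m

section RelExponent

variable {α m r : ℝ}

theorem rpow_two_rpow_half (hr : 0 ≤ r) (α : ℝ) : (r ^ (2 : ℝ)) ^ (α / 2) = r ^ α := by
  rw [← rpow_mul hr]
  ring_nf

theorem relExponent_zero (hα : 0 < α) (hr : 0 ≤ r) : relExponent α 0 r = r ^ α := by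
  rw [relExponent, zero_rpow (by positivity), add_zero, sub_zero, rpow_two_rpow_half hr]

theorem rpow_sub_le_relExponent (hα : 0 ≤ α) (hm : 0 ≤ m) (hr : 0 ≤ r) :
    r ^ α - m ≤ relExponent α m r := by
  rw [relExponent, ← rpow_two_rpow_half hr α]
  gcongr
  exact le_add_of_nonneg_right (by positivity)

theorem relExponent_le (hα₀ : 0 < α) (hα₂ : α ≤ 2) (hm : 0 ≤ m) (hr : 0 ≤ r) :
    relExponent α m r ≤ r ^ α := by
  have hmass : (m ^ ((2 : ℝ) / α)) ^ (α / 2) = m := by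
    rw [← rpow_mul hm, div_mul_div_comm, mul_comm, div_self (by positivity), rpow_one]
  calc relExponent α m r ≤ (r ^ (2 : ℝ)) ^ (α / 2) + (m ^ ((2 : ℝ) / α)) ^ (α / 2) - m := by
        rw [relExponent]
        gcongr
        exact rpow_add_le_add_rpow (by positivity) (by positivity) (by positivity) (by linarith)
    _ = r ^ α := by rw [rpow_two_rpow_half hr, hmass, add_sub_cancel_right]

theorem continuous_relExponent (hα : 0 ≤ α) : Continuous (relExponent α m) :=
  (((continuous_id.rpow_const fun _ => Or.inr zero_le_two).add continuous_const).rpow_const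
    fun _ => Or.inr (by positivity)).sub continuous_const

end RelExponent

theorem abs_exp_neg_sub_exp_neg_le {a b δ : ℝ} (h₁ : a - δ ≤ b) (h₂ : b ≤ a) :
    |exp (-a) - exp (-b)| ≤ (exp δ - 1) * exp (-a) := by
  have hba : exp (-a) ≤ exp (-b) := exp_le_exp.2 (neg_le_neg h₂)
  have hδ : exp (-b) ≤ exp δ * exp (-a) := by
    rw [← exp_add]
    exact exp_le_exp.2 (by linarith)
  rw [abs_sub_comm, abs_of_nonneg (sub_nonneg.2 hba)]
  linarith

section FourierIntegrand

open Complex (I)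

theorem norm_cexp_neg_I_mul_sub_ofReal (c a : ℝ) : ‖Complex.exp (-(I * c) - a)‖ = exp (-a) := by
  rw [Complex.norm_exp]
  simp

theorem norm_cexp_neg_I_mul_sub_sub (c a b : ℝ) :
    ‖Complex.exp (-(I * c) - a) - Complex.exp (-(I * c) - b)‖ = |exp (-a) - exp (-b)| := by
  have hfactor (r : ℝ) : Complex.exp (-(I * c) - r) = Complex.exp (-(I * c)) * (exp (-r) : ℝ) := by
    rw [sub_eq_add_neg, Complex.exp_add, Complex.ofReal_exp, Complex.ofReal_neg]
  rw [hfactor, hfactor, ← mul_sub, norm_mul, ← Complex.ofReal_sub, Complex.norm_real,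
    norm_eq_abs, Complex.norm_exp]
  simp

variable {E : Type*} [NormedAddCommGroup E] [InnerProductSpace ℝ E] [FiniteDimensional ℝ E]
  [MeasurableSpace E] [BorelSpace E] (μ : Measure E) [μ.IsAddHaarMeasure] {α m t : ℝ}

theorem integrable_cexp_relExponent (hα : 0 < α) (hm : 0 ≤ m) (ht : 0 < t) (x : E) :
    Integrable (fun ξ : E =>
      Complex.exp (-(I * (inner ℝ ξ x : ℝ)) - (t * relExponent α m ‖ξ‖ : ℝ))) μ := by
  refine ((integrable_exp_neg_mul_norm_rpow μ hα ht).const_mul (exp (t * m))).mono' ?_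
    (ae_of_all _ fun ξ => ?_)
  · have := continuous_relExponent (m := m) hα.le
    fun_prop
  · rw [norm_cexp_neg_I_mul_sub_ofReal, ← exp_add]
    have := rpow_sub_le_relExponent hα.le hm (norm_nonneg ξ)
    exact exp_le_exp.2 (by nlinarith)

theorem norm_integral_cexp_relExponent_sub_le (hα₀ : 0 < α) (hα₂ : α ≤ 2) (hm : 0 ≤ m)
    (ht : 0 < t) (x : E) :
    ‖∫ ξ, Complex.exp (-(I * (inner ℝ ξ x : ℝ)) - (t * relExponent α 0 ‖ξ‖ : ℝ)) ∂μ -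
        ∫ ξ, Complex.exp (-(I * (inner ℝ ξ x : ℝ)) - (t * relExponent α m ‖ξ‖ : ℝ)) ∂μ‖
      ≤ (exp (t * m) - 1) * t ^ (-(Module.finrank ℝ E / α)) * ∫ ξ, exp (-‖ξ‖ ^ α) ∂μ := by
  rw [← integral_sub (integrable_cexp_relExponent μ hα₀ le_rfl ht x)
      (integrable_cexp_relExponent μ hα₀ hm ht x),
    mul_assoc, ← integral_exp_neg_mul_norm_rpow μ hα₀ ht, ← integral_const_mul]
  refine norm_integral_le_of_norm_le ((integrable_exp_neg_mul_norm_rpow μ hα₀ ht).const_mul _)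
    (ae_of_all _ fun ξ => ?_)
  rw [norm_cexp_neg_I_mul_sub_sub, relExponent_zero hα₀ (norm_nonneg ξ)]
  apply abs_exp_neg_sub_exp_neg_le
  · have := rpow_sub_le_relExponent hα₀.le hm (norm_nonneg ξ)
    nlinarith
  · exact mul_le_mul_of_nonneg_left (relExponent_le hα₀ hα₂ hm (norm_nonneg ξ)) ht.le

end FourierIntegrand

section RelDensity

variable {d : ℕ} {α m t : ℝ}

theorem relDensity_eq (x : EuclideanSpace ℝ (Fin d)) :
    relDensity d α m t x = (2 * π) ^ (-(d : ℝ)) *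
      (∫ ξ : EuclideanSpace ℝ (Fin d), Complex.exp
        (-(Complex.I * (inner ℝ ξ x : ℝ)) - (t * relExponent α m ‖ξ‖ : ℝ))).re :=
  rfl

theorem abs_relDensity_zero_sub_le (hα₀ : 0 < α) (hα₂ : α ≤ 2) (hm : 0 ≤ m) (ht : 0 < t)
    (x : EuclideanSpace ℝ (Fin d)) :
    |relDensity d α 0 t x - relDensity d α m t x| ≤ (2 * π) ^ (-(d : ℝ)) *
      ((exp (t * m) - 1) * t ^ (-((d : ℝ) / α)) *
        ∫ ξ : EuclideanSpace ℝ (Fin d), exp (-‖ξ‖ ^ α)) := by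
  rw [relDensity_eq, relDensity_eq, ← mul_sub, abs_mul, abs_of_nonneg (by positivity),
    ← Complex.sub_re]
  gcongr
  refine (Complex.abs_re_le_norm _).trans ?_
  simpa only [finrank_euclideanSpace_fin] using
    norm_integral_cexp_relExponent_sub_le volume hα₀ hα₂ hm ht x

end RelDensity

theorem relDensity_diff_bound_and_tendsto_general (d : ℕ) (α : ℝ) (hα₀ : 0 < α)
    (hα₂ : α < 2) (L M : ℝ) (hL : 0 < L) :
    (∀ m : ℝ, 0 < m → ∀ t ∈ Set.Icc L M, ∀ x : EuclideanSpace ℝ (Fin d),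
      |relDensity d α 0 t x - relDensity d α m t x|
        ≤ (2 * Real.pi) ^ (-(d : ℝ)) * L ^ (-((d : ℝ) / α)) *
            (Real.exp (m * M) * (α / 2) * (m * M) ^ ((2 : ℝ) / α) *
                (∫ ξ : EuclideanSpace ℝ (Fin d), Real.exp (-‖ξ‖ ^ α) * ‖ξ‖ ^ (α - 2))
              + (Real.exp (m * M) - 1) *
                (∫ ξ : EuclideanSpace ℝ (Fin d), Real.exp (-‖ξ‖ ^ α))))
      ∧ Tendsto (fun m : ℝ =>
            (2 * Real.pi) ^ (-(d : ℝ)) * L ^ (-((d : ℝ) / α)) *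
              (Real.exp (m * M) * (α / 2) * (m * M) ^ ((2 : ℝ) / α) *
                  (∫ ξ : EuclideanSpace ℝ (Fin d), Real.exp (-‖ξ‖ ^ α) * ‖ξ‖ ^ (α - 2))
                + (Real.exp (m * M) - 1) *
                  (∫ ξ : EuclideanSpace ℝ (Fin d), Real.exp (-‖ξ‖ ^ α))))
          (nhdsWithin 0 (Set.Ioi 0)) (nhds 0) := by
  set I₁ := ∫ ξ : EuclideanSpace ℝ (Fin d), exp (-‖ξ‖ ^ α) * ‖ξ‖ ^ (α - 2)
  set I₂ := ∫ ξ : EuclideanSpace ℝ (Fin d), exp (-‖ξ‖ ^ α)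
  refine ⟨fun m hm t ⟨hLt, htM⟩ x => ?_, ?_⟩
  · have ht : 0 < t := hL.trans_le hLt
    have hM : 0 < M := ht.trans_le htM
    have hexp_le : exp (t * m) - 1 ≤ exp (m * M) - 1 :=
      sub_le_sub_right (exp_le_exp.2 (by nlinarith)) 1
    have hexp_nonneg : 0 ≤ exp (m * M) - 1 := sub_nonneg.2 (one_le_exp (by positivity))
    have hpow_le : t ^ (-((d : ℝ) / α)) ≤ L ^ (-((d : ℝ) / α)) :=
      rpow_le_rpow_of_nonpos hL hLt (neg_nonpos.2 (by positivity))
    calc |relDensity d α 0 t x - relDensity d α m t x|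
        ≤ (2 * π) ^ (-(d : ℝ)) * ((exp (t * m) - 1) * t ^ (-((d : ℝ) / α)) * I₂) :=
          abs_relDensity_zero_sub_le hα₀ hα₂.le hm.le ht x
      _ ≤ (2 * π) ^ (-(d : ℝ)) * L ^ (-((d : ℝ) / α)) * ((exp (m * M) - 1) * I₂) := by
          rw [mul_assoc _ (L ^ _), mul_comm (L ^ _), mul_right_comm (exp (m * M) - 1)]
          gcongr
      _ ≤ _ := by
          gcongr
          exact le_add_of_nonneg_left (by positivity)
  · have hcont : Continuous fun m : ℝ => (2 * π) ^ (-(d : ℝ)) * L ^ (-((d : ℝ) / α)) *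
        (exp (m * M) * (α / 2) * (m * M) ^ ((2 : ℝ) / α) * I₁ + (exp (m * M) - 1) * I₂) := by
      have := continuous_rpow_const (q := 2 / α) (by positivity)
      fun_prop
    simpa [zero_rpow (by positivity : (2 : ℝ) / α ≠ 0)] using
      (hcont.tendsto 0).mono_left nhdsWithin_le_nhds

/-- For all `m > 0`, `t ∈ [L,M]` and `x`,
`|p^0(t,x) - p^m(t,x)| ≤ (2π)^{-d} L^{-d/α} [e^{mM}(α/2)(mM)^{2/α} ∫ e^{-|ξ|^α}|ξ|^{α-2} dξ
  + (e^{mM}-1) ∫ e^{-|ξ|^α} dξ]`, and the right-hand side tends to `0` as `m → 0⁺`. -/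
theorem relDensity_diff_bound_and_tendsto (d : ℕ) (hd : 2 ≤ d) (α : ℝ) (hα₀ : 0 < α)
    (hα₂ : α < 2) (L M : ℝ) (hL : 0 < L) (hLM : L < M) :
    (∀ m : ℝ, 0 < m → ∀ t ∈ Set.Icc L M, ∀ x : EuclideanSpace ℝ (Fin d),
      |relDensity d α 0 t x - relDensity d α m t x|
        ≤ (2 * Real.pi) ^ (-(d : ℝ)) * L ^ (-((d : ℝ) / α)) *
            (Real.exp (m * M) * (α / 2) * (m * M) ^ ((2 : ℝ) / α) *
                (∫ ξ : EuclideanSpace ℝ (Fin d), Real.exp (-‖ξ‖ ^ α) * ‖ξ‖ ^ (α - 2))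
              + (Real.exp (m * M) - 1) *
                (∫ ξ : EuclideanSpace ℝ (Fin d), Real.exp (-‖ξ‖ ^ α))))
      ∧ Tendsto (fun m : ℝ =>
            (2 * Real.pi) ^ (-(d : ℝ)) * L ^ (-((d : ℝ) / α)) *
              (Real.exp (m * M) * (α / 2) * (m * M) ^ ((2 : ℝ) / α) *
                  (∫ ξ : EuclideanSpace ℝ (Fin d), Real.exp (-‖ξ‖ ^ α) * ‖ξ‖ ^ (α - 2))
                + (Real.exp (m * M) - 1) *
                  (∫ ξ : EuclideanSpace ℝ (Fin d), Real.exp (-‖ξ‖ ^ α))))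
          (nhdsWithin 0 (Set.Ioi 0)) (nhds 0) :=
  relDensity_diff_bound_and_tendsto_general d α hα₀ hα₂ L M hL
end
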